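/- arXiv:math/9805077 — 3 statements merged into one kernel-verified Lean document; each statement's English description precedes it below -/
import Mathlib

section
/- Let (G, D) be a connection of rank μ and G₀ a lattice in (G, D). Then the following are equivalent: (1) there exist a ℂ[θ]-basis (g₁,…,g_μ) of G₀ and constant matrices A₀, A₁ ∈ M_μ(ℂ) such that t(gᵢ) = Σⱼ (A₀)ᵢⱼ·gⱼ + Σⱼ (A₁)ᵢⱼ·θ·gⱼ for all i; (2) there exists a finitely generated ℂ[τ]-submodule H⁰ ⊆ G with τ·D(H⁰) ⊆ H⁰ and ℂ[τ,τ⁻¹]·H⁰ = G, such that G₀ is the internal direct sum of the ℂ-subspaces H⁰ ∩ G₀ and θ·G₀ (i.e. (H⁰ ∩ G₀) + θ·G₀ = G₀ and (H⁰ ∩ G₀) ∩ θ·G₀ = 0). -/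
/-!
Write `V = H ∩ G₀`. For (1) ⇒ (2) take `H` the `ℂ[τ]`-span of the basis: the shape of the
connection matrix makes it stable under `τD`, and writing each element of `ℂ[θ]` as a constant
plus `θ ℂ[θ]` gives `G₀ = V + θG₀`, the sum being direct because `ℂ[τ] ∩ θℂ[θ] = 0`.

For (2) ⇒ (1), `V` is a complex complement of `θG₀` in `G₀`, so it is finite dimensional (as
`G₀ / θG₀` is) and any complex basis of `V` is a `ℂ[θ]`-basis of `G₀`: a `ℂ[θ]`-relation among
its vectors is divisible by every power of `θ`, and `H ⊆ ℂ[τ]V` makes `V` generate `G`, after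
which powers of `θ` are peeled off one at a time. Finally `-D gᵢ = a₀ + θ a₁ + θ² b` with
`a₀, a₁ ∈ V`, and `τ(-D gᵢ) ∈ H` puts `θ b` into `V ∩ θG₀ = 0`.
-/

open LaurentPolynomial

set_option synthInstance.maxHeartbeats 1000000
set_option maxHeartbeats 2000000

noncomputable section

/-- The ring `ℂ[τ,τ⁻¹]` of Laurent polynomials. -/
abbrev 𝕃 : Type := LaurentPolynomial ℂ

/-- the variable `τ` -/
noncomputable def τ : 𝕃 := T 1

/-- `θ := τ⁻¹` -/
noncomputable def θ : 𝕃 := T (-1)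

/-- `ℂ[τ]` as a subring (subalgebra) of `ℂ[τ,τ⁻¹]` -/
noncomputable def Cτ : Subalgebra ℂ 𝕃 := Algebra.adjoin ℂ {τ}

/-- `ℂ[θ]` as a subring (subalgebra) of `ℂ[τ,τ⁻¹]` -/
noncomputable def Cθ : Subalgebra ℂ 𝕃 := Algebra.adjoin ℂ {θ}

variable {G : Type} [AddCommGroup G] [Module ℂ G] [Module 𝕃 G] [IsScalarTower ℂ 𝕃 G]

/-- scalar multiplication by a Laurent polynomial, as a `ℂ`-linear endomorphism -/
noncomputable def smulL (p : 𝕃) : G →ₗ[ℂ] G := p • (LinearMap.id : G →ₗ[ℂ] G)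


lemma tau_mul_theta : τ * θ = 1 := by
  rw [τ, θ, ← T_add, add_neg_cancel, T_zero]

lemma isUnit_theta : IsUnit θ := isUnit_T (-1)

lemma theta_mem_Ctheta : θ ∈ Cθ := Algebra.self_mem_adjoin_singleton ℂ θ

lemma tau_mem_Ctau : τ ∈ Cτ := Algebra.self_mem_adjoin_singleton ℂ τ

lemma aeval_tau (f : Polynomial ℂ) : Polynomial.aeval τ f = Polynomial.toLaurent f := by
  rw [← Polynomial.toLaurentAlg_apply]
  congr 1
  exact Polynomial.algHom_ext (by simp [τ, Polynomial.toLaurentAlg_apply])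

lemma aeval_theta (f : Polynomial ℂ) :
    Polynomial.aeval θ f = invert (Polynomial.toLaurent f) := by
  rw [← Polynomial.toLaurentAlg_apply]
  change _ = (invert.toAlgHom.comp Polynomial.toLaurentAlg) f
  congr 1
  exact Polynomial.algHom_ext (by simp [θ])

lemma coeff_T_mul (m n : ℤ) (p : 𝕃) : (T m * p).coeff n = p.coeff (n - m) := by
  rw [T, AddMonoidAlgebra.coeff_single_mul_apply, one_mul, neg_add_eq_sub]

lemma coeff_toLaurent_of_neg (f : Polynomial ℂ) {n : ℤ} (hn : n < 0) :
    (Polynomial.toLaurent f).coeff n = 0 := by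
  rw [← Finsupp.notMem_support_iff, support_coeff_toLaurent]
  simp only [Finset.mem_map, Nat.castEmbedding_apply, not_exists, not_and]
  omega

lemma coeff_of_mem_Ctau {p : 𝕃} (hp : p ∈ Cτ) {n : ℤ} (hn : n < 0) : p.coeff n = 0 := by
  rw [Cτ, Algebra.adjoin_singleton_eq_range_aeval] at hp
  obtain ⟨f, rfl⟩ := hp
  rw [AlgHom.toRingHom_eq_coe, RingHom.coe_coe, aeval_tau]
  exact coeff_toLaurent_of_neg f hn

lemma coeff_of_mem_Ctheta {p : 𝕃} (hp : p ∈ Cθ) {n : ℤ} (hn : 0 < n) : p.coeff n = 0 := by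
  rw [Cθ, Algebra.adjoin_singleton_eq_range_aeval] at hp
  obtain ⟨f, rfl⟩ := hp
  rw [AlgHom.toRingHom_eq_coe, RingHom.coe_coe, aeval_theta, invert_apply]
  exact coeff_toLaurent_of_neg f (by omega)

lemma exists_eq_algebraMap_add_theta_mul {p : 𝕃} (hp : p ∈ Cθ) :
    ∃ (a : ℂ) (q : 𝕃), q ∈ Cθ ∧ p = algebraMap ℂ 𝕃 a + θ * q := by
  rw [Cθ, Algebra.adjoin_singleton_eq_range_aeval] at hp
  obtain ⟨f, rfl⟩ := hp
  refine ⟨f.coeff 0, _, Polynomial.aeval_mem_adjoin_singleton ℂ θ (p := f.divX), ?_⟩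
  conv_lhs => rw [AlgHom.toRingHom_eq_coe, RingHom.coe_coe, ← f.X_mul_divX_add]
  simp only [map_add, map_mul, Polynomial.aeval_X, Polynomial.aeval_C]
  ring

lemma eq_zero_of_mem_Ctau_of_eq_theta_mul {r s : 𝕃} (hr : r ∈ Cτ) (hs : s ∈ Cθ)
    (h : r = θ * s) : r = 0 := by
  ext n
  rcases lt_or_ge n 0 with hn | hn
  · exact coeff_of_mem_Ctau hr hn
  · rw [h, θ, coeff_T_mul, coeff_of_mem_Ctheta hs (by omega)]
    rfl

lemma eq_zero_of_forall_eq_theta_pow_mul {p : 𝕃} (h : ∀ k : ℕ, ∃ q ∈ Cθ, p = θ ^ k * q) :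
    p = 0 := by
  ext n
  obtain ⟨q, hq, rfl⟩ := h ((-n).toNat + 1)
  rw [θ, T_pow, coeff_T_mul, coeff_of_mem_Ctheta hq (by push_cast; omega)]
  rfl

lemma exists_theta_pow_mul_mem (p : 𝕃) : ∃ n : ℕ, θ ^ n * p ∈ Cθ := by
  obtain ⟨n, f, hf⟩ := exists_T_pow (invert p)
  refine ⟨n, ?_⟩
  have hp : θ ^ n * p = invert (Polynomial.toLaurent f) := by
    rw [hf, map_mul, involutive_invert, invert_T, θ, T_pow, mul_comm, mul_neg_one]
  rw [hp, ← aeval_theta, Cθ]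
  exact Polynomial.aeval_mem_adjoin_singleton ℂ θ

lemma exists_theta_pow_mul_mem_of_fintype {ι : Type*} [Fintype ι] (p : ι → 𝕃) :
    ∃ N : ℕ, ∀ i, θ ^ N * p i ∈ Cθ := by
  choose n hn using fun i => exists_theta_pow_mul_mem (p i)
  refine ⟨∑ i, n i, fun i => ?_⟩
  rw [← Nat.sub_add_cancel (Finset.single_le_sum (fun j _ => Nat.zero_le (n j))
    (Finset.mem_univ i)), pow_add, mul_assoc]
  exact mul_mem (pow_mem theta_mem_Ctheta _) (hn i)

lemma Derivation.map_mem_Ctau (d : Derivation ℂ 𝕃 𝕃) (hd : d τ ∈ Cτ) {p : 𝕃}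
    (hp : p ∈ Cτ) : d p ∈ Cτ := by
  induction hp using Algebra.adjoin_induction with
  | mem x hx => rwa [Set.mem_singleton_iff.mp hx]
  | algebraMap r => rw [Derivation.map_algebraMap]; exact zero_mem Cτ
  | add a b _ _ ha hb => rw [map_add]; exact add_mem ha hb
  | mul a b ha' hb' ha hb =>
    rw [Derivation.leibniz, smul_eq_mul, smul_eq_mul]
    exact add_mem (mul_mem ha' hb) (mul_mem hb' ha)

section LaurentModule

variable {M : Type*} [AddCommGroup M] [Module 𝕃 M]

lemma tau_smul_theta_smul (x : M) : τ • θ • x = x := by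
  rw [smul_smul, tau_mul_theta, one_smul]

lemma tau_pow_smul_theta_pow_smul (k : ℕ) (x : M) : τ ^ k • θ ^ k • x = x := by
  rw [smul_smul, ← mul_pow, tau_mul_theta, one_pow, one_smul]

lemma theta_pow_smul_tau_pow_smul (k : ℕ) (x : M) : θ ^ k • τ ^ k • x = x := by
  rw [smul_smul, ← mul_pow, mul_comm, tau_mul_theta, one_pow, one_smul]

lemma smul_mem_of_mem_Ctheta {N : Submodule Cθ M} {p : 𝕃} (hp : p ∈ Cθ) {x : M}
    (hx : x ∈ N) : p • x ∈ N :=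
  N.smul_mem ⟨p, hp⟩ hx

lemma smul_mem_of_mem_Ctau {N : Submodule Cτ M} {p : 𝕃} (hp : p ∈ Cτ) {x : M}
    (hx : x ∈ N) : p • x ∈ N :=
  N.smul_mem ⟨p, hp⟩ hx

lemma exists_theta_pow_smul_mem {N : Submodule Cθ M} (hN : Submodule.span 𝕃 (N : Set M) = ⊤)
    (x : M) : ∃ k : ℕ, θ ^ k • x ∈ N := by
  have hmono {k m : ℕ} {y : M} (hkm : k ≤ m) (hy : θ ^ k • y ∈ N) : θ ^ m • y ∈ N := by
    rw [← Nat.sub_add_cancel hkm, pow_add, mul_smul]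
    exact smul_mem_of_mem_Ctheta (pow_mem theta_mem_Ctheta _) hy
  induction (hN ▸ Submodule.mem_top : x ∈ Submodule.span 𝕃 (N : Set M))
    using Submodule.span_induction with
  | mem y hy => exact ⟨0, by rwa [pow_zero, one_smul]⟩
  | zero => exact ⟨0, by rw [smul_zero]; exact zero_mem N⟩
  | add y z _ _ hy hz =>
    obtain ⟨k, hk⟩ := hy
    obtain ⟨m, hm⟩ := hz
    exact ⟨k + m, smul_add (θ ^ (k + m)) y z ▸
      add_mem (hmono (Nat.le_add_right k m) hk) (hmono (Nat.le_add_left m k) hm)⟩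
  | smul p y _ hy =>
    obtain ⟨k, hk⟩ := hy
    obtain ⟨j, hj⟩ := exists_theta_pow_mul_mem p
    refine ⟨j + k, ?_⟩
    rw [smul_smul, show θ ^ (j + k) * p = (θ ^ j * p) * θ ^ k by ring, mul_smul]
    exact smul_mem_of_mem_Ctheta hj hk

lemma linearIndependent_of_linearIndependent_Ctheta {ι : Type*} [Fintype ι] {g : ι → M}
    (hg : LinearIndependent Cθ g) : LinearIndependent 𝕃 g := by
  rw [Fintype.linearIndependent_iff] at hg ⊢
  intro c hc i
  obtain ⟨N, hN⟩ := exists_theta_pow_mul_mem_of_fintype c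
  have h := hg (fun j => ⟨θ ^ N * c j, hN j⟩) <| by
    change ∑ j, (θ ^ N * c j) • g j = 0
    simp_rw [mul_smul]
    rw [← Finset.smul_sum, hc, smul_zero]
  exact (mul_eq_zero.1 (congrArg Subtype.val (h i))).resolve_left
    (pow_ne_zero _ isUnit_theta.ne_zero)

end LaurentModule

lemma exists_sum_smul_eq_add_theta_smul {ι : Type*} [Fintype ι] (P : ι → Cθ) (g : ι → G) :
    ∃ (a : ι → ℂ) (Q : ι → Cθ), (∀ i, (P i : 𝕃) = algebraMap ℂ 𝕃 (a i) + θ * Q i) ∧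
      ∑ i, P i • g i = ∑ i, a i • g i + θ • ∑ i, Q i • g i := by
  choose a q hq h using fun i => exists_eq_algebraMap_add_theta_mul (P i).2
  refine ⟨a, fun i => ⟨q i, hq i⟩, h, ?_⟩
  rw [Finset.smul_sum, ← Finset.sum_add_distrib]
  refine Finset.sum_congr rfl fun i _ => ?_
  change (P i : 𝕃) • g i = a i • g i + θ • q i • g i
  rw [h i, add_smul, algebraMap_smul, mul_smul]

/-- `G₀ = (H ∩ G₀) ⊕ θ • G₀` as complex vector spaces. -/
structure IsSplitting (H : Submodule Cτ G) (G₀ : Submodule Cθ G) : Prop where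
  exists_eq_add : ∀ x ∈ G₀, ∃ a, a ∈ H ∧ a ∈ G₀ ∧ ∃ b ∈ G₀, x = a + θ • b
  eq_zero : ∀ x : G, x ∈ H → x ∈ G₀ → (∃ b ∈ G₀, x = θ • b) → x = 0

section Span

variable {ι : Type*} [Fintype ι] {g : ι → G}

lemma sum_smul_mem_span (R : Subalgebra ℂ 𝕃) (a : ι → ℂ) :
    ∑ i, a i • g i ∈ Submodule.span R (Set.range g) :=
  Submodule.span_le_restrictScalars ℂ R _ <|
    (Submodule.mem_span_range_iff_exists_fun ℂ).2 ⟨a, rfl⟩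

lemma isSplitting_span (hg : LinearIndependent Cθ g) :
    IsSplitting (Submodule.span Cτ (Set.range g)) (Submodule.span Cθ (Set.range g)) where
  exists_eq_add x hx := by
    obtain ⟨P, rfl⟩ := (Submodule.mem_span_range_iff_exists_fun Cθ).1 hx
    obtain ⟨a, Q, -, h⟩ := exists_sum_smul_eq_add_theta_smul P g
    exact ⟨_, sum_smul_mem_span Cτ a, sum_smul_mem_span Cθ a, _,
      (Submodule.mem_span_range_iff_exists_fun Cθ).2 ⟨Q, rfl⟩, h⟩
  eq_zero x hx _ := by
    rintro ⟨b, hb, rfl⟩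
    obtain ⟨r, hr⟩ := (Submodule.mem_span_range_iff_exists_fun Cτ).1 hx
    obtain ⟨s, rfl⟩ := (Submodule.mem_span_range_iff_exists_fun Cθ).1 hb
    have hrs : ∀ i, (r i : 𝕃) = θ * s i := by
      refine fun i => sub_eq_zero.1 <| Fintype.linearIndependent_iff.1
        (linearIndependent_of_linearIndependent_Ctheta hg) (fun i => r i - θ * s i) ?_ i
      simp_rw [sub_smul, mul_smul, Finset.sum_sub_distrib, ← Finset.smul_sum]
      exact sub_eq_zero.2 hr
    rw [← hr]
    refine Finset.sum_eq_zero fun i _ => ?_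
    change (r i : 𝕃) • g i = 0
    rw [eq_zero_of_mem_Ctau_of_eq_theta_mul (r i).2 (s i).2 (hrs i), zero_smul]

lemma tau_smul_mem_span_of_neg_eq {y : G} (a₀ a₁ : ι → ℂ)
    (h : -y = ∑ j, a₀ j • g j + ∑ j, a₁ j • θ • g j) :
    τ • y ∈ Submodule.span Cτ (Set.range g) := by
  have hy : τ • y = -(∑ j, a₀ j • τ • g j + ∑ j, a₁ j • g j) := by
    rw [← neg_neg y, h]
    simp_rw [smul_neg, smul_add, Finset.smul_sum, smul_comm τ (_ : ℂ), tau_smul_theta_smul]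
  rw [hy]
  refine neg_mem (add_mem (Submodule.sum_mem _ fun j _ => ?_) (sum_smul_mem_span Cτ a₁))
  exact Submodule.smul_of_tower_mem _ _
    (smul_mem_of_mem_Ctau tau_mem_Ctau (Submodule.subset_span ⟨j, rfl⟩))

end Span

lemma tau_smul_mem_span_of_forall_mem {M : Type*} [AddCommGroup M] [Module ℂ M] [Module 𝕃 M]
    {dτ : Derivation ℂ 𝕃 𝕃} (hdτ : dτ τ ∈ Cτ) {D : M →ₗ[ℂ] M}
    (hD : ∀ (p : 𝕃) (g : M), D (p • g) = dτ p • g + p • D g) {s : Set M}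
    (hs : ∀ x ∈ s, τ • D x ∈ Submodule.span Cτ s) :
    ∀ x ∈ Submodule.span Cτ s, τ • D x ∈ Submodule.span Cτ s := by
  intro x hx
  induction hx using Submodule.span_induction with
  | mem x hx => exact hs x hx
  | zero => rw [map_zero, smul_zero]; exact zero_mem _
  | add x y _ _ hx hy => rw [map_add, smul_add]; exact add_mem hx hy
  | smul p x hx hDx =>
    change τ • D ((p : 𝕃) • x) ∈ _
    rw [hD, smul_add, smul_smul, smul_comm τ (p : 𝕃)]
    have hτdτ : τ * dτ p ∈ Cτ := mul_mem tau_mem_Ctau (dτ.map_mem_Ctau hdτ p.2)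
    exact add_mem (smul_mem_of_mem_Ctau hτdτ hx) (smul_mem_of_mem_Ctau p.2 hDx)

lemma span_range_coe_basis {ι R M : Type*} [Semiring R] [AddCommMonoid M] [Module R M]
    {V : Submodule R M} (b : Module.Basis ι R V) :
    Submodule.span R (Set.range fun i => (b i : M)) = V := by
  have h : (Set.range fun i => (b i : M)) = V.subtype '' Set.range b := Set.range_comp _ _
  rw [h, Submodule.span_image, b.span_eq, Submodule.map_top, Submodule.range_subtype]

def interSubspace (H : Submodule Cτ G) (G₀ : Submodule Cθ G) : Submodule ℂ G :=
  H.restrictScalars ℂ ⊓ G₀.restrictScalars ℂ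

section Splitting

variable {H : Submodule Cτ G} {G₀ : Submodule Cθ G}

lemma IsSplitting.eq_zero_of_mem (hS : IsSplitting H G₀) {x b : G}
    (hx : x ∈ interSubspace H G₀) (hb : b ∈ G₀) (h : x = θ • b) : x = 0 :=
  hS.eq_zero x hx.1 hx.2 ⟨b, hb, h⟩

lemma finiteDimensional_interSubspace (hG₀ : G₀.FG) (hS : IsSplitting H G₀) :
    FiniteDimensional ℂ (interSubspace H G₀) := by
  obtain ⟨s, hs⟩ := hG₀
  set N : Submodule ℂ G := (G₀.restrictScalars ℂ).map (smulL θ)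
  have hN {b : G} (hb : b ∈ G₀) : θ • b ∈ N := ⟨b, hb, rfl⟩
  have hsup (x : G) (hx : x ∈ G₀) : x ∈ Submodule.span ℂ (s : Set G) ⊔ N := by
    rw [← hs] at hx
    induction hx using Submodule.span_induction with
    | mem x hx => exact Submodule.mem_sup_left (Submodule.subset_span hx)
    | zero => exact zero_mem _
    | add x y _ _ hx hy => exact add_mem hx hy
    | smul p x hx hpx =>
      obtain ⟨a, q, hq, hp⟩ := exists_eq_algebraMap_add_theta_mul p.2
      change (p : 𝕃) • x ∈ _
      rw [hp, add_smul, algebraMap_smul, mul_smul]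
      exact add_mem (Submodule.smul_mem _ a hpx)
        (Submodule.mem_sup_right (hN (hs ▸ smul_mem_of_mem_Ctheta hq hx)))
  -- `H ∩ G₀` embeds into `G / θ G₀`, with image inside the image of `span ℂ s`
  let f : interSubspace H G₀ →ₗ[ℂ] G ⧸ N := N.mkQ ∘ₗ (interSubspace H G₀).subtype
  have hf : Function.Injective f := by
    refine (injective_iff_map_eq_zero f).2 fun v hv => Subtype.ext ?_
    obtain ⟨b, hb, hvb⟩ := (Submodule.Quotient.mk_eq_zero N).1 hv
    exact hS.eq_zero_of_mem v.2 hb hvb.symm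
  have hrange (v : interSubspace H _) : f v ∈ (Submodule.span ℂ (s : Set G)).map N.mkQ := by
    obtain ⟨w, hw, n, hn, hwn⟩ := Submodule.mem_sup.1 (hsup v v.2.2)
    refine ⟨w, hw, ?_⟩
    simp [f, ← hwn, (Submodule.Quotient.mk_eq_zero N).2 hn]
  exact Module.Finite.of_injective (f.codRestrict _ hrange)
    fun v w hvw => hf (congrArg Subtype.val hvw)

lemma mem_span_interSubspace_of_mem (hS : IsSplitting H G₀)
    (hG₀ : Submodule.span 𝕃 (G₀ : Set G) = ⊤) {x : G} (hx : x ∈ H) :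
    x ∈ Submodule.span Cτ (interSubspace H G₀ : Set G) := by
  obtain ⟨k, hk⟩ := exists_theta_pow_smul_mem hG₀ x
  induction k generalizing x with
  | zero => exact Submodule.subset_span ⟨hx, by rwa [pow_zero, one_smul] at hk⟩
  | succ k ih =>
    obtain ⟨a, haH, haG, b, hb, hab⟩ := hS.exists_eq_add _ hk
    have hx_eq : x = τ ^ (k + 1) • a + τ ^ k • b := by
      calc x = τ ^ (k + 1) • θ ^ (k + 1) • x := (tau_pow_smul_theta_pow_smul _ _).symm
        _ = τ ^ (k + 1) • a + τ ^ k • τ • θ • b := by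
          rw [hab, smul_add, pow_succ, mul_smul _ τ (θ • b)]
        _ = τ ^ (k + 1) • a + τ ^ k • b := by rw [tau_smul_theta_smul]
    have hbH : τ ^ k • b ∈ H := by
      rw [eq_sub_of_add_eq' hx_eq.symm]
      exact sub_mem hx (smul_mem_of_mem_Ctau (pow_mem tau_mem_Ctau _) haH)
    rw [hx_eq]
    exact add_mem (smul_mem_of_mem_Ctau (pow_mem tau_mem_Ctau _) (Submodule.subset_span ⟨haH, haG⟩))
      (ih hbH (by rwa [theta_pow_smul_tau_pow_smul]))

variable {ι : Type*} {g : ι → G}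

lemma span_range_eq_top (hS : IsSplitting H G₀) (hG₀ : Submodule.span 𝕃 (G₀ : Set G) = ⊤)
    (hH : Submodule.span 𝕃 (H : Set G) = ⊤)
    (hgV : Submodule.span ℂ (Set.range g) = interSubspace H G₀) :
    Submodule.span 𝕃 (Set.range g) = ⊤ := by
  rw [eq_top_iff, ← hH, Submodule.span_le]
  intro x hx
  have hV : Submodule.span Cτ (interSubspace H G₀ : Set G)
      ≤ (Submodule.span 𝕃 (Set.range g)).restrictScalars Cτ := by
    rw [← hgV, Submodule.span_span_of_tower]
    exact Submodule.span_le_restrictScalars Cτ 𝕃 _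
  exact hV (mem_span_interSubspace_of_mem hS hG₀ hx)

lemma apply_mem_interSubspace (hgV : Submodule.span ℂ (Set.range g) = interSubspace H G₀)
    (i : ι) : g i ∈ interSubspace H G₀ :=
  hgV ▸ Submodule.subset_span ⟨i, rfl⟩

variable [Fintype ι]

lemma sum_smul_mem_interSubspace (hgV : Submodule.span ℂ (Set.range g) = interSubspace H G₀)
    (a : ι → ℂ) : ∑ i, a i • g i ∈ interSubspace H G₀ :=
  hgV ▸ (Submodule.mem_span_range_iff_exists_fun ℂ).2 ⟨a, rfl⟩

lemma span_Ctheta_eq (hS : IsSplitting H G₀) (hG₀ : Submodule.span 𝕃 (G₀ : Set G) = ⊤)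
    (hH : Submodule.span 𝕃 (H : Set G) = ⊤)
    (hgV : Submodule.span ℂ (Set.range g) = interSubspace H G₀) :
    Submodule.span Cθ (Set.range g) = G₀ := by
  set S := Submodule.span Cθ (Set.range g)
  have hSG : S ≤ G₀ := Submodule.span_le.2 <| Set.range_subset_iff.2 fun i =>
    (apply_mem_interSubspace hgV i).2
  have hpeel (y : G) (hy : y ∈ G₀) (hθy : θ • y ∈ S) : y ∈ S := by
    obtain ⟨P, hP⟩ := (Submodule.mem_span_range_iff_exists_fun Cθ).1 hθy
    obtain ⟨a, Q, -, h⟩ := exists_sum_smul_eq_add_theta_smul P g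
    have hQ : ∑ i, Q i • g i ∈ S := (Submodule.mem_span_range_iff_exists_fun Cθ).2 ⟨Q, rfl⟩
    have ha : ∑ i, a i • g i = θ • (y - ∑ i, Q i • g i) := by
      rw [smul_sub, ← hP, h, add_sub_cancel_right]
    have ha0 := hS.eq_zero_of_mem (sum_smul_mem_interSubspace hgV a) (sub_mem hy (hSG hQ)) ha
    have hyQ : y - ∑ i, Q i • g i = 0 := isUnit_theta.smul_eq_zero.1 (by rw [← ha, ha0])
    rwa [sub_eq_zero.1 hyQ]
  refine le_antisymm hSG fun x hx => ?_
  have hspanS : Submodule.span 𝕃 (S : Set G) = ⊤ := by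
    rw [Submodule.span_span_of_tower]
    exact span_range_eq_top hS hG₀ hH hgV
  obtain ⟨k, hk⟩ := exists_theta_pow_smul_mem hspanS x
  induction k generalizing x with
  | zero => rwa [pow_zero, one_smul] at hk
  | succ k ih =>
    refine hpeel x hx (ih (θ • x) (smul_mem_of_mem_Ctheta theta_mem_Ctheta hx) ?_)
    rwa [smul_smul, ← pow_succ]

lemma linearIndependent_Ctheta (hS : IsSplitting H G₀) (hg : LinearIndependent ℂ g)
    (hgV : Submodule.span ℂ (Set.range g) = interSubspace H G₀) :
    LinearIndependent Cθ g := by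
  rw [Fintype.linearIndependent_iff]
  -- every relation over `ℂ[θ]` is `θ` times another relation
  have hdiv (P : ι → Cθ) (hP : ∑ i, P i • g i = 0) :
      ∃ Q : ι → Cθ, (∀ i, (P i : 𝕃) = θ * Q i) ∧ ∑ i, Q i • g i = 0 := by
    obtain ⟨a, Q, hPQ, h⟩ := exists_sum_smul_eq_add_theta_smul P g
    have hQ : ∑ i, Q i • g i ∈ G₀ := Submodule.sum_mem _ fun i _ =>
      Submodule.smul_mem _ _ (apply_mem_interSubspace hgV i).2
    have ha : ∑ i, a i • g i = θ • -∑ i, Q i • g i := by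
      rw [smul_neg, eq_neg_iff_add_eq_zero, ← h, hP]
    have ha0 := hS.eq_zero_of_mem (sum_smul_mem_interSubspace hgV a) (neg_mem hQ) ha
    refine ⟨Q, fun i => ?_, isUnit_theta.smul_eq_zero.1 ?_⟩
    · rw [hPQ i, Fintype.linearIndependent_iff.1 hg a ha0 i, map_zero, zero_add]
    · rw [hP, ha0, zero_add] at h
      exact h.symm
  have hpow (k : ℕ) (P : ι → Cθ) (hP : ∑ i, P i • g i = 0) :
      ∃ Q : ι → Cθ, ∀ i, (P i : 𝕃) = θ ^ k * Q i := by
    induction k generalizing P with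
    | zero => exact ⟨P, fun i => (one_mul _).symm⟩
    | succ k ih =>
      obtain ⟨Q, hPQ, hQ⟩ := hdiv P hP
      obtain ⟨R, hR⟩ := ih Q hQ
      exact ⟨R, fun i => by rw [hPQ, hR, pow_succ', mul_assoc]⟩
  intro P hP i
  refine Subtype.ext (eq_zero_of_forall_eq_theta_pow_mul fun k => ?_)
  obtain ⟨Q, hQ⟩ := hpow k P hP
  exact ⟨Q i, (Q i).2, hQ i⟩

lemma exists_eq_sum_add_theta_smul_sum (hS : IsSplitting H G₀)
    (hgV : Submodule.span ℂ (Set.range g) = interSubspace H G₀) {x : G} (hx : x ∈ G₀)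
    (hτx : τ • x ∈ H) : ∃ c c' : ι → ℂ, x = ∑ j, c j • g j + ∑ j, c' j • θ • g j := by
  obtain ⟨a₀, ha₀H, ha₀G, b, hb, rfl⟩ := hS.exists_eq_add x hx
  obtain ⟨a₁, ha₁H, ha₁G, b₁, hb₁, rfl⟩ := hS.exists_eq_add b hb
  have hτ : τ • (a₀ + θ • (a₁ + θ • b₁)) = (τ • a₀ + a₁) + θ • b₁ := by
    rw [smul_add, tau_smul_theta_smul, add_assoc]
  have hb₁0 : θ • b₁ = 0 := by
    refine hS.eq_zero_of_mem ⟨?_, smul_mem_of_mem_Ctheta theta_mem_Ctheta hb₁⟩ hb₁ rfl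
    rw [eq_sub_of_add_eq' hτ.symm]
    exact sub_mem hτx (add_mem (smul_mem_of_mem_Ctau tau_mem_Ctau ha₀H) ha₁H)
  obtain ⟨c, rfl⟩ := (Submodule.mem_span_range_iff_exists_fun ℂ).1
    (hgV ▸ ⟨ha₀H, ha₀G⟩ : a₀ ∈ Submodule.span ℂ (Set.range g))
  obtain ⟨c', rfl⟩ := (Submodule.mem_span_range_iff_exists_fun ℂ).1
    (hgV ▸ ⟨ha₁H, ha₁G⟩ : a₁ ∈ Submodule.span ℂ (Set.range g))
  refine ⟨c, c', ?_⟩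
  simp_rw [hb₁0, add_zero, Finset.smul_sum, smul_comm θ (_ : ℂ)]

lemma finrank_interSubspace (hS : IsSplitting H G₀) (hG₀ : Submodule.span 𝕃 (G₀ : Set G) = ⊤)
    (hH : Submodule.span 𝕃 (H : Set G) = ⊤) [FiniteDimensional ℂ (interSubspace H G₀)] :
    Module.finrank ℂ (interSubspace H G₀) = Module.finrank 𝕃 G := by
  let b := Module.finBasis ℂ (interSubspace H G₀)
  have hgV := span_range_coe_basis b
  have hg := linearIndependent_Ctheta hS
    (b.linearIndependent.map' _ (Submodule.ker_subtype _)) hgV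
  rw [Module.finrank_eq_card_basis (Module.Basis.mk
    (linearIndependent_of_linearIndependent_Ctheta hg) (span_range_eq_top hS hG₀ hH hgV).ge),
    Fintype.card_fin]

end Splitting

theorem statement0_general (μ : ℕ) (G : Type) [AddCommGroup G] [Module ℂ G] [Module 𝕃 G]
    [IsScalarTower ℂ 𝕃 G] (hrank : Module.finrank 𝕃 G = μ)
    (dτ : Derivation ℂ 𝕃 𝕃) (hdτ : dτ τ = 1)
    (D : G →ₗ[ℂ] G) (hD : ∀ (p : 𝕃) (g : G), D (p • g) = dτ p • g + p • D g)
    (G₀ : Submodule Cθ G) (hFG : G₀.FG)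
    (hspan : Submodule.span 𝕃 (G₀ : Set G) = ⊤)
    (hstab : ∀ g ∈ G₀, -(D g) ∈ G₀) :
    (∃ (g : Fin μ → G) (A₀ A₁ : Matrix (Fin μ) (Fin μ) ℂ),
        (∀ i, g i ∈ G₀) ∧ LinearIndependent Cθ g ∧
        Submodule.span Cθ (Set.range g) = G₀ ∧
        (∀ i, -(D (g i)) = (∑ j, A₀ i j • g j) + ∑ j, A₁ i j • (θ • g j)))
    ↔
    (∃ H : Submodule Cτ G, H.FG ∧ (∀ g ∈ H, τ • D g ∈ H) ∧
        Submodule.span 𝕃 (H : Set G) = ⊤ ∧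
        (∀ x ∈ G₀, ∃ a, a ∈ H ∧ a ∈ G₀ ∧ ∃ b ∈ G₀, x = a + θ • b) ∧
        (∀ x : G, x ∈ H → x ∈ G₀ → (∃ b ∈ G₀, x = θ • b) → x = 0)) := by
  constructor
  · rintro ⟨g, A₀, A₁, -, hg, rfl, hA⟩
    have hτD : ∀ x ∈ Set.range g, τ • D x ∈ Submodule.span Cτ (Set.range g) :=
      Set.forall_mem_range.2 fun i => tau_smul_mem_span_of_neg_eq _ _ (hA i)
    have hH : Submodule.span 𝕃 (Submodule.span Cτ (Set.range g) : Set G) = ⊤ := by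
      rw [Submodule.span_span_of_tower, ← hspan, Submodule.span_span_of_tower]
    exact ⟨_, Submodule.fg_span (Set.finite_range g),
      tau_smul_mem_span_of_forall_mem (hdτ ▸ one_mem Cτ) hD hτD, hH,
      (isSplitting_span hg).exists_eq_add, (isSplitting_span hg).eq_zero⟩
  · rintro ⟨H, -, hH, hHspan, hdec, hzero⟩
    have hS : IsSplitting H G₀ := ⟨hdec, hzero⟩
    have := finiteDimensional_interSubspace hFG hS
    let b := Module.finBasisOfFinrankEq ℂ _
      ((finrank_interSubspace hS hspan hHspan).trans hrank)
    have hgV := span_range_coe_basis b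
    have hτD (i : Fin μ) : τ • -(D (b i)) ∈ H := by
      rw [smul_neg]
      exact neg_mem (hH _ (b i).2.1)
    choose A₀ A₁ hA using fun i =>
      exists_eq_sum_add_theta_smul_sum hS hgV (hstab _ (b i).2.2) (hτD i)
    exact ⟨fun i => b i, Matrix.of A₀, Matrix.of A₁, fun i => (b i).2.2,
      linearIndependent_Ctheta hS (b.linearIndependent.map' _ (Submodule.ker_subtype _)) hgV,
      span_Ctheta_eq hS hspan hHspan hgV, hA⟩

/-- solvability of the Birkhoff problem: (1) ⟺ (2). -/
theorem statement0 (μ : ℕ) (G : Type) [AddCommGroup G] [Module ℂ G] [Module 𝕃 G]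
    [IsScalarTower ℂ 𝕃 G] [Module.Free 𝕃 G] (hrank : Module.finrank 𝕃 G = μ)
    (dτ : Derivation ℂ 𝕃 𝕃) (hdτ : dτ τ = 1)
    (D : G →ₗ[ℂ] G) (hD : ∀ (p : 𝕃) (g : G), D (p • g) = dτ p • g + p • D g)
    (G₀ : Submodule Cθ G) (hFG : G₀.FG) (hfree : Module.Free Cθ G₀)
    (hspan : Submodule.span 𝕃 (G₀ : Set G) = ⊤)
    (hstab : ∀ g ∈ G₀, -(D g) ∈ G₀) :
    (∃ (g : Fin μ → G) (A₀ A₁ : Matrix (Fin μ) (Fin μ) ℂ),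
        (∀ i, g i ∈ G₀) ∧ LinearIndependent Cθ g ∧
        Submodule.span Cθ (Set.range g) = G₀ ∧
        (∀ i, -(D (g i)) = (∑ j, A₀ i j • g j) + ∑ j, A₁ i j • (θ • g j)))
    ↔
    (∃ H : Submodule Cτ G, H.FG ∧ (∀ g ∈ H, τ • D g ∈ H) ∧
        Submodule.span 𝕃 (H : Set G) = ⊤ ∧
        (∀ x ∈ G₀, ∃ a, a ∈ H ∧ a ∈ G₀ ∧ ∃ b ∈ G₀, x = a + θ • b) ∧
        (∀ x : G, x ∈ H → x ∈ G₀ → (∃ b ∈ G₀, x = θ • b) → x = 0)) :=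
  statement0_general μ G hrank dτ hdτ D hD G₀ hFG hspan hstab
end
end

section
/- Let μ ≥ 1, let A₀, A₁, A₀′, A₁′ ∈ M_μ(ℂ), and let P ∈ M_μ(ℂ[θ]) be invertible over ℂ[θ] (equivalently, det P is a nonzero constant). If A₀′ + θ·A₁′ = θ²·(dP/dθ)·P⁻¹ + P·(A₀ + θ·A₁)·P⁻¹ as matrices over ℂ[θ], then trace(A₁′) = trace(A₁) and trace(A₀′) = trace(A₀). -/
set_option maxHeartbeats 1000000

/-- invariance of the traces of `A₀` and `A₁` under a holomorphic
base change `P` (invertible over `ℂ[θ]`). -/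
theorem statement1 (μ : ℕ) (hμ : 1 ≤ μ) (A₀ A₁ A₀' A₁' : Matrix (Fin μ) (Fin μ) ℂ)
    (P Q : Matrix (Fin μ) (Fin μ) (Polynomial ℂ))
    (hPQ : P * Q = 1) (hQP : Q * P = 1)
    (heq : A₀'.map Polynomial.C + (Polynomial.X : Polynomial ℂ) • A₁'.map Polynomial.C
        = ((Polynomial.X : Polynomial ℂ) ^ 2) • (P.map fun q => Polynomial.derivative q) * Q
          + P * (A₀.map Polynomial.C + (Polynomial.X : Polynomial ℂ) • A₁.map Polynomial.C) * Q) :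
    Matrix.trace A₁' = Matrix.trace A₁ ∧ Matrix.trace A₀' = Matrix.trace A₀ := by
  have htr := congrArg Matrix.trace heq
  have hmapC : ∀ A : Matrix (Fin μ) (Fin μ) ℂ,
      Matrix.trace (A.map Polynomial.C) = Polynomial.C (Matrix.trace A) := by
    intro A
    simpa using (AddMonoidHom.map_trace (Polynomial.C : ℂ →+* Polynomial ℂ) A).symm
  have h2 : P * (A₀.map Polynomial.C + (Polynomial.X : Polynomial ℂ) • A₁.map Polynomial.C) * Q
      = P * ((A₀.map Polynomial.C + (Polynomial.X : Polynomial ℂ) • A₁.map Polynomial.C) * Q) := by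
    rw [Matrix.mul_assoc]
  rw [h2, Matrix.smul_mul] at htr
  rw [Matrix.trace_add, Matrix.trace_add, Matrix.trace_smul, Matrix.trace_smul,
    Matrix.trace_mul_comm P, Matrix.mul_assoc, hQP, Matrix.mul_one,
    Matrix.trace_add, Matrix.trace_smul, hmapC, hmapC, hmapC, hmapC] at htr
  set t := Matrix.trace ((P.map fun q => Polynomial.derivative q) * Q) with ht
  constructor
  · have h1 := congrArg (fun p => Polynomial.coeff p 1) htr
    simpa [Polynomial.coeff_C, pow_succ, mul_assoc, Polynomial.coeff_X_mul] using h1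
  · have h0 := congrArg (fun p => Polynomial.coeff p 0) htr
    simpa [Polynomial.coeff_C, pow_succ, mul_assoc, Polynomial.coeff_X_mul] using h0
end

section
/- Let E be a finite-dimensional ℂ-vector space and T ∈ End(E). Let A ⊆ [0,1) be a finite set of real numbers such that every eigenvalue of T is of the form −α with α ∈ A; for α ∈ A let E_α := ⋃_m ker(T + α·id)^m be the generalized eigenspace, so that E = ⊕_{α∈A} E_α; for α ∈ A set V_α E := ⊕_{α′∈A, α′≤α} E_{α′} and let π_α : V_α E → E_α be the projection with kernel ⊕_{α′∈A, α′<α} E_{α′}. Let (G_k)_{k∈ℤ} be an increasing family of ℂ-subspaces of E with G_k = 0 for all sufficiently small k and G_k = E for all sufficiently large k. Suppose that for each α ∈ A there is a decreasing family (H_α^k)_{k∈ℤ} of subspaces of E_α such that T(H_α^k) ⊆ H_α^k for all k, and such that for every k ∈ ℤ the space E_α is the internal direct sum of H_α^k and π_α(G_{k−1} ∩ V_α E). Then, setting L^k := ⊕_{α∈A} H_α^k, one has T(L^k) ⊆ L^k for all k, and for every k ∈ ℤ the space E is the internal direct sum of L^k and G_{k−1}. -/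
/-! Both halves of `E = L^k ⊕ G_{k-1}` come from the order on the finite set `A`.
Spanning: an element `p = π_α x` of `π_α(G_{k-1} ∩ V_α E)` differs from `x ∈ G_{k-1}` by an
element of lower weight, so `E_α ⊆ H_α^k + G_{k-1} + ⊕_{α' < α} E_{α'}`, and induction on `α` puts
every `E_α`, hence `E`, inside `L^k + G_{k-1}`.
Independence: if `x = ∑ h_α ∈ G_{k-1}` with `h_α ∈ H_α^k`, and `α` is the largest weight with
`h_α ≠ 0`, then `x ∈ V_α E` and `π_α x = h_α`, so `h_α ∈ H_α^k ∩ π_α(G_{k-1} ∩ V_α E) = 0`. -/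

set_option maxHeartbeats 1000000

noncomputable section

variable {E : Type} [AddCommGroup E] [Module ℂ E]

/-- the generalized eigenspace `E_α = ⋃ₘ ker (T + α·id)^m` -/
noncomputable def genEig (T : Module.End ℂ E) (α : ℝ) : Submodule ℂ E :=
  ⨆ m : ℕ, LinearMap.ker ((T + (α : ℂ) • (1 : Module.End ℂ E)) ^ m)

/-- `V_α E = ⊕_{α′ ∈ A, α′ ≤ α} E_{α′}` -/
noncomputable def VaE (T : Module.End ℂ E) (A : Finset ℝ) (α : ℝ) : Submodule ℂ E :=
  ⨆ α' : {a : ℝ // a ∈ A ∧ a ≤ α}, genEig T α'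

/-- `⊕_{α′ ∈ A, α′ < α} E_{α′}`, the kernel of the projection `π_α` -/
noncomputable def lowEig (T : Module.End ℂ E) (A : Finset ℝ) (α : ℝ) : Submodule ℂ E :=
  ⨆ α' : {a : ℝ // a ∈ A ∧ a < α}, genEig T α'

/-- the image `π_α(G_{k−1} ∩ V_α E)` of the projection `π_α : V_α E → E_α`
with kernel `⊕_{α′<α} E_{α′}` -/
def piImg (T : Module.End ℂ E) (A : Finset ℝ) (G : ℤ → Submodule ℂ E) (α : ℝ) (k : ℤ) :
    Set E :=
  {y | y ∈ genEig T α ∧ ∃ x, x ∈ G (k - 1) ∧ x ∈ VaE T A α ∧ x - y ∈ lowEig T A α}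

open Module End

lemma iSup_le_comap_of_forall_le_comap {R M ι : Type*} [Semiring R] [AddCommMonoid M]
    [Module R M] (f : Module.End R M) (p : ι → Submodule R M)
    (hp : ∀ i, p i ≤ (p i).comap f) : ⨆ i, p i ≤ (⨆ i, p i).comap f :=
  iSup_le fun i => (hp i).trans (Submodule.comap_mono (le_iSup p i))

lemma genEig_eq_maxGenEigenspace (T : Module.End ℂ E) (α : ℝ) :
    genEig T α = T.maxGenEigenspace (-(α : ℂ)) := by
  rw [← iSup_genEigenspace_eq, genEig]
  congr 1
  ext m
  rw [genEigenspace_nat, neg_smul, sub_neg_eq_add]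

lemma iSup_genEig_eq_top [FiniteDimensional ℂ E] (T : Module.End ℂ E) (A : Finset ℝ)
    (heig : ∀ c : ℂ, T.HasEigenvalue c → ∃ a ∈ A, c = -(a : ℂ)) :
    ⨆ a : {a : ℝ // a ∈ A}, genEig T a = ⊤ := by
  rw [eq_top_iff, ← iSup_maxGenEigenspace_eq_top T]
  refine iSup_le fun μ => ?_
  by_cases hμ : T.maxGenEigenspace μ = ⊥
  · simp [hμ]
  · have hev : T.HasEigenvalue μ :=
      (hasUnifEigenvalue_iff_hasUnifEigenvalue_one (k := ⊤) (by simp)).1 hμ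
    obtain ⟨a, ha, rfl⟩ := heig μ hev
    rw [← genEig_eq_maxGenEigenspace]
    exact le_iSup (fun a : {a : ℝ // a ∈ A} => genEig T a) ⟨a, ha⟩

lemma genEig_le_sup_sup_lowEig {T : Module.End ℂ E} {A : Finset ℝ} {G : ℤ → Submodule ℂ E}
    {H : Submodule ℂ E} {a : ℝ} {k : ℤ}
    (hspan : ∀ y ∈ genEig T a, ∃ h ∈ H, ∃ p ∈ piImg T A G a k, y = h + p) :
    genEig T a ≤ H ⊔ G (k - 1) ⊔ lowEig T A a := by
  intro y hy
  obtain ⟨h, hh, p, ⟨-, x, hxG, -, hxp⟩, rfl⟩ := hspan y hy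
  rw [← sub_sub_cancel x p]
  exact add_mem (Submodule.mem_sup_left (Submodule.mem_sup_left hh))
    (sub_mem (Submodule.mem_sup_left (Submodule.mem_sup_right hxG))
      (Submodule.mem_sup_right hxp))

lemma genEig_le_of_forall_genEig_le_sup_lowEig {T : Module.End ℂ E} {A : Finset ℝ}
    {S : Submodule ℂ E} (hstep : ∀ a ∈ A, genEig T a ≤ S ⊔ lowEig T A a) :
    ∀ a : {a : ℝ // a ∈ A}, genEig T a ≤ S := by
  intro a
  induction a using WellFoundedLT.induction with
  | _ a ih =>
    have hlow : lowEig T A a ≤ S :=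
      iSup_le fun b => ih ⟨b, b.2.1⟩ b.2.2
    exact (hstep a a.2).trans (sup_le le_rfl hlow)

lemma iSup_sup_eq_top_of_span_piImg [FiniteDimensional ℂ E] {T : Module.End ℂ E}
    {A : Finset ℝ} (heig : ∀ c : ℂ, T.HasEigenvalue c → ∃ a ∈ A, c = -(a : ℂ))
    {G : ℤ → Submodule ℂ E} {H : ℝ → Submodule ℂ E} {k : ℤ}
    (hspan : ∀ a ∈ A, ∀ y ∈ genEig T a, ∃ h ∈ H a, ∃ p ∈ piImg T A G a k, y = h + p) :
    (⨆ a : {a : ℝ // a ∈ A}, H a) ⊔ G (k - 1) = ⊤ := by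
  set L := ⨆ a : {a : ℝ // a ∈ A}, H a
  have hstep : ∀ a ∈ A, genEig T a ≤ L ⊔ G (k - 1) ⊔ lowEig T A a := fun a ha =>
    (genEig_le_sup_sup_lowEig (hspan a ha)).trans <|
      sup_le_sup_right (sup_le_sup_right (le_iSup (fun b : {b : ℝ // b ∈ A} => H b) ⟨a, ha⟩) _) _
  rw [eq_top_iff, ← iSup_genEig_eq_top T A heig]
  exact iSup_le (genEig_le_of_forall_genEig_le_sup_lowEig hstep)

lemma apply_mem_piImg_of_forall_le {T : Module.End ℂ E} {A : Finset ℝ}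
    {G : ℤ → Submodule ℂ E} {k : ℤ} {f : {a : ℝ // a ∈ A} →₀ E}
    (hf : ∀ j : {a : ℝ // a ∈ A}, f j ∈ genEig T j) (hG : (f.sum fun _ v => v) ∈ G (k - 1))
    {i : {a : ℝ // a ∈ A}} (hi : i ∈ f.support) (hmax : ∀ j ∈ f.support, j ≤ i) :
    f i ∈ piImg T A G i k := by
  refine ⟨hf i, _, hG, ?_, ?_⟩
  · exact Submodule.sum_mem _ fun j hj =>
      Submodule.mem_iSup_of_mem ⟨j, j.2, hmax j hj⟩ (hf j)
  · rw [Finsupp.sum, ← Finset.add_sum_erase _ _ hi, add_sub_cancel_left]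
    refine Submodule.sum_mem _ fun j hj => ?_
    have hlt : j < i := lt_of_le_of_ne (hmax j (Finset.mem_of_mem_erase hj))
      (Finset.ne_of_mem_erase hj)
    exact Submodule.mem_iSup_of_mem ⟨j, j.2, hlt⟩ (hf j)

lemma iSup_inf_eq_bot_of_indep_piImg {T : Module.End ℂ E} {A : Finset ℝ}
    {G : ℤ → Submodule ℂ E} {H : ℝ → Submodule ℂ E} {k : ℤ}
    (hHsub : ∀ a ∈ A, H a ≤ genEig T a)
    (hindep : ∀ a ∈ A, ∀ y : E, y ∈ H a → y ∈ piImg T A G a k → y = 0) :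
    (⨆ a : {a : ℝ // a ∈ A}, H a) ⊓ G (k - 1) = ⊥ := by
  rw [eq_bot_iff]
  rintro x ⟨hxL, hxG⟩
  obtain ⟨f, hf, rfl⟩ := (Submodule.mem_iSup_iff_exists_finsupp _ _).1 hxL
  by_contra hx
  have hne : f.support.Nonempty := by
    rw [Finsupp.support_nonempty_iff]
    rintro rfl
    exact hx (by simp)
  set i := f.support.max' hne
  have hi : i ∈ f.support := f.support.max'_mem hne
  have hpi := apply_mem_piImg_of_forall_le (fun j : {a : ℝ // a ∈ A} => hHsub j j.2 (hf j)) hxG hi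
    fun j hj => f.support.le_max' j hj
  exact Finsupp.mem_support_iff.1 hi (hindep i i.2 (f i) (hf i) hpi)

theorem statement10_general (E : Type) [AddCommGroup E] [Module ℂ E] [FiniteDimensional ℂ E]
    (T : Module.End ℂ E) (A : Finset ℝ)
    (heig : ∀ c : ℂ, Module.End.HasEigenvalue T c → ∃ a ∈ A, c = -(a : ℂ))
    (G : ℤ → Submodule ℂ E)
    (H : ℝ → ℤ → Submodule ℂ E)
    (hHsub : ∀ a ∈ A, ∀ k : ℤ, H a k ≤ genEig T a)
    (hHT : ∀ a ∈ A, ∀ k : ℤ, ∀ x ∈ H a k, T x ∈ H a k)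
    (hdirect : ∀ a ∈ A, ∀ k : ℤ,
      (∀ y ∈ genEig T a, ∃ h ∈ H a k, ∃ p ∈ piImg T A G a k, y = h + p) ∧
      (∀ y : E, y ∈ H a k → y ∈ piImg T A G a k → y = 0)) :
    ∀ k : ℤ,
      (∀ x ∈ (⨆ a : {a : ℝ // a ∈ A}, H a k), T x ∈ (⨆ a : {a : ℝ // a ∈ A}, H a k)) ∧
      (⨆ a : {a : ℝ // a ∈ A}, H a k) ⊔ G (k - 1) = ⊤ ∧
      (⨆ a : {a : ℝ // a ∈ A}, H a k) ⊓ G (k - 1) = ⊥ := by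
  intro k
  refine ⟨?_, ?_, ?_⟩
  · exact iSup_le_comap_of_forall_le_comap T (fun a : {a : ℝ // a ∈ A} => H a k)
      fun a => hHT a a.2 k
  · exact iSup_sup_eq_top_of_span_piImg (H := fun a => H a k) heig
      fun a ha => (hdirect a ha k).1
  · exact iSup_inf_eq_bot_of_indep_piImg (H := fun a => H a k)
      (fun a ha => hHsub a ha k) fun a ha => (hdirect a ha k).2

/-- glueing filtrations opposite to `G_•` on the generalized eigenspaces
into a filtration opposite to `G_•` on `E`. -/
theorem statement10 (E : Type) [AddCommGroup E] [Module ℂ E] [FiniteDimensional ℂ E]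
    (T : Module.End ℂ E) (A : Finset ℝ) (hA : ∀ a ∈ A, 0 ≤ a ∧ a < 1)
    (heig : ∀ c : ℂ, Module.End.HasEigenvalue T c → ∃ a ∈ A, c = -(a : ℂ))
    (G : ℤ → Submodule ℂ E) (hGmono : Monotone G)
    (hGbot : ∃ k₀ : ℤ, ∀ k ≤ k₀, G k = ⊥) (hGtop : ∃ k₁ : ℤ, ∀ k ≥ k₁, G k = ⊤)
    (H : ℝ → ℤ → Submodule ℂ E)
    (hHsub : ∀ a ∈ A, ∀ k : ℤ, H a k ≤ genEig T a)
    (hHdec : ∀ a ∈ A, ∀ k l : ℤ, k ≤ l → H a l ≤ H a k)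
    (hHT : ∀ a ∈ A, ∀ k : ℤ, ∀ x ∈ H a k, T x ∈ H a k)
    (hdirect : ∀ a ∈ A, ∀ k : ℤ,
      (∀ y ∈ genEig T a, ∃ h ∈ H a k, ∃ p ∈ piImg T A G a k, y = h + p) ∧
      (∀ y : E, y ∈ H a k → y ∈ piImg T A G a k → y = 0)) :
    ∀ k : ℤ,
      (∀ x ∈ (⨆ a : {a : ℝ // a ∈ A}, H a k), T x ∈ (⨆ a : {a : ℝ // a ∈ A}, H a k)) ∧
      (⨆ a : {a : ℝ // a ∈ A}, H a k) ⊔ G (k - 1) = ⊤ ∧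
      (⨆ a : {a : ℝ // a ∈ A}, H a k) ⊓ G (k - 1) = ⊥ :=
  statement10_general E T A heig G H hHsub hHT hdirect
end
end
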